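/- arXiv:1409.6424 — 2 statements merged into one kernel-verified Lean document; each statement's English description precedes it below -/
import Mathlib

section
/- If (r,u) is a smooth solution of the coupled diffusive system ∂_t r = (1/(2γ)) ∂_xx τ(r,u), ∂_t u = ∂_x(D ∂_x β⁻¹) + (1/(4γ)) ∂_xx(τ²) on [0,1] with Neumann/mixed boundary conditions ∂_x τ(t,0)=0, ∂_x β⁻¹(t,0)=∂_x β⁻¹(t,1)=0, then the time derivative of the total entropy ∫₀¹ S(r(t,x),u(t,x)) dx equals ∫₀¹ [D (∂_x β / β)² + (β/(2γ)) (∂_x τ)²] dx, which is nonnegative. -/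
open Set Metric MeasureTheory intervalIntegral
open scoped ContDiff



private lemma comp2_smooth {F : ℝ → ℝ → ℝ} (hF : ContDiff ℝ (⊤ : ℕ∞) (fun p : ℝ × ℝ => F p.1 p.2))
    {f g : ℝ → ℝ} (hf : ContDiff ℝ (⊤ : ℕ∞) f) (hg : ContDiff ℝ (⊤ : ℕ∞) g) :
    ContDiff ℝ (⊤ : ℕ∞) (fun y => F (f y) (g y)) := hF.comp (hf.prodMk hg)

private lemma hasDerivAt_comp2 {F : ℝ → ℝ → ℝ}
    (hF : ContDiff ℝ (⊤ : ℕ∞) (fun p : ℝ × ℝ => F p.1 p.2))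
    {f g : ℝ → ℝ} {f' g' : ℝ} {s : ℝ} (hf : HasDerivAt f f' s) (hg : HasDerivAt g g' s) :
    HasDerivAt (fun y => F (f y) (g y))
      (deriv (fun x => F x (g s)) (f s) * f' + deriv (fun y => F (f s) y) (g s) * g') s := by
  have hFd : Differentiable ℝ (fun p : ℝ × ℝ => F p.1 p.2) := hF.differentiable (by simp)
  set L := fderiv ℝ (fun p : ℝ × ℝ => F p.1 p.2) (f s, g s) with hLdef
  have hL : HasFDerivAt (fun p : ℝ × ℝ => F p.1 p.2) L (f s, g s) := (hFd _).hasFDerivAt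
  have hc : HasDerivAt (fun y => (f y, g y)) (f', g') s := hf.prodMk hg
  have h1 : HasDerivAt (fun y => F (f y) (g y)) (L (f', g')) s := by have := hL.comp_hasDerivAt s hc; exact this
  have hx : HasDerivAt (fun x => F x (g s)) (L (1, 0)) (f s) :=
    by have := hL.comp_hasDerivAt (f s) ((hasDerivAt_id (f s)).prodMk (hasDerivAt_const (f s) (g s))); exact this
  have hy : HasDerivAt (fun y => F (f s) y) (L (0, 1)) (g s) :=
    by have := hL.comp_hasDerivAt (g s) ((hasDerivAt_const (g s) (f s)).prodMk (hasDerivAt_id (g s))); exact this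
  rw [hx.deriv, hy.deriv]
  have hv : (f', g') = f' • ((1:ℝ), (0:ℝ)) + g' • ((0:ℝ), (1:ℝ)) := by
    simp [Prod.ext_iff]
  have : L (f', g') = L (1, 0) * f' + L (0, 1) * g' := by
    rw [hv, map_add, L.map_smul, L.map_smul, smul_eq_mul, smul_eq_mul]; ring
  rw [← this]; exact h1

private lemma cont_partial_t {r : ℝ → ℝ → ℝ}
    (hr : ContDiff ℝ (⊤ : ℕ∞) (fun p : ℝ × ℝ => r p.1 p.2)) :
    Continuous (fun p : ℝ × ℝ => deriv (fun s => r s p.2) p.1) := by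
  have hFd : Differentiable ℝ (fun p : ℝ × ℝ => r p.1 p.2) := hr.differentiable (by simp)
  have key : ∀ p : ℝ × ℝ, deriv (fun s => r s p.2) p.1
      = fderiv ℝ (fun p : ℝ × ℝ => r p.1 p.2) p ((1:ℝ), (0:ℝ)) := by
    intro p
    have hL : HasFDerivAt (fun p : ℝ × ℝ => r p.1 p.2)
        (fderiv ℝ (fun p : ℝ × ℝ => r p.1 p.2) p) p := (hFd p).hasFDerivAt
    have : HasDerivAt (fun s => r s p.2)
        (fderiv ℝ (fun p : ℝ × ℝ => r p.1 p.2) p ((1:ℝ), (0:ℝ))) p.1 := by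
      have := hL.comp_hasDerivAt p.1
        ((hasDerivAt_id p.1).prodMk (hasDerivAt_const p.1 p.2))
      exact this
    exact this.deriv
  simp only [key]
  exact (hr.continuous_fderiv (by simp)).clm_apply continuous_const


private lemma deriv_param_integral (F G : ℝ → ℝ → ℝ)
    (hG : Continuous fun p : ℝ × ℝ => G p.1 p.2)
    (hF : ∀ s, Continuous (F s))
    (hFG : ∀ x s, HasDerivAt (fun s' => F s' x) (G s x) s) (t : ℝ) :
    HasDerivAt (fun s => ∫ x in (0:ℝ)..1, F s x) (∫ x in (0:ℝ)..1, G t x) t := by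
  obtain ⟨C, hC⟩ := (isCompact_Icc.prod isCompact_Icc :
      IsCompact (Icc (t-1) (t+1) ×ˢ Icc (0:ℝ) 1)).exists_bound_of_continuousOn hG.continuousOn
  have h := intervalIntegral.hasDerivAt_integral_of_dominated_loc_of_deriv_le
    (F := F) (F' := G) (x₀ := t) (a := 0) (b := 1) (μ := volume)
    (bound := fun _ => C) (s := ball t 1) (ball_mem_nhds t one_pos)
    (Filter.Eventually.of_forall fun s => (hF s).aestronglyMeasurable)
    ((hF t).intervalIntegrable _ _)
    ((hG.comp (continuous_const.prodMk continuous_id)).aestronglyMeasurable)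
    ?_ ((continuous_const (y := C)).intervalIntegrable _ _) ?_
  · exact h.2
  · refine Filter.Eventually.of_forall fun x hx s hs => ?_
    have hx' : x ∈ Icc (0:ℝ) 1 := by
      have : x ∈ Ioc (0:ℝ) 1 := by rwa [Set.uIoc_of_le (by norm_num : (0:ℝ) ≤ 1)] at hx
      exact ⟨this.1.le, this.2⟩
    have hs' : s ∈ Icc (t-1) (t+1) := by
      have := abs_lt.mp (by simpa [Real.dist_eq] using mem_ball.mp hs)
      constructor <;> linarith [this.1, this.2]
    exact hC (s, x) ⟨hs', hx'⟩
  · exact Filter.Eventually.of_forall fun x _ s _ => hFG x s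

private lemma ibp_term (D : ℝ) (B : ℝ → ℝ) (hB : ContDiff ℝ (⊤ : ℕ∞) B) (hBpos : ∀ x, 0 < B x)
    (h0 : deriv (fun x => (B x)⁻¹) 0 = 0) (h1 : deriv (fun x => (B x)⁻¹) 1 = 0) :
    (∫ x in (0:ℝ)..1, B x * (D * deriv (deriv (fun x => (B x)⁻¹)) x))
      = ∫ x in (0:ℝ)..1, D * (deriv B x / B x)^2 := by
  have hBne : ∀ x, B x ≠ 0 := fun x => (hBpos x).ne'
  have hBd : Differentiable ℝ B := hB.differentiable (by simp)
  have hIs : ContDiff ℝ ∞ (fun x => (B x)⁻¹) := (hB.inv hBne).of_le (by simp)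
  have hJs : ContDiff ℝ ∞ (deriv (fun x => (B x)⁻¹)) := (contDiff_infty_iff_deriv.mp hIs).2
  have hJd : Differentiable ℝ (deriv (fun x => (B x)⁻¹)) := hJs.differentiable (by norm_num)
  have hB's : ContDiff ℝ ∞ (deriv B) := (contDiff_infty_iff_deriv.mp (hB.of_le (by simp))).2
  have hJ's : Continuous (deriv (deriv (fun x => (B x)⁻¹))) :=
    ((contDiff_infty_iff_deriv.mp hJs).2).continuous
  have hibp := intervalIntegral.integral_mul_deriv_eq_deriv_mul
    (a := 0) (b := 1) (u := B) (v := fun x => D * deriv (fun x => (B x)⁻¹) x)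
    (u' := deriv B) (v' := fun x => D * deriv (deriv (fun x => (B x)⁻¹)) x)
    (fun x _ => (hBd x).hasDerivAt) (fun x _ => ((hJd x).hasDerivAt.const_mul D))
    ((hB's.continuous).intervalIntegrable _ _)
    ((continuous_const.mul hJ's).intervalIntegrable _ _)
  rw [hibp, h0, h1]
  have : -(∫ x in (0:ℝ)..1, deriv B x * (D * deriv (fun x => (B x)⁻¹) x))
      = ∫ x in (0:ℝ)..1, D * (deriv B x / B x)^2 := by
    rw [← intervalIntegral.integral_neg]
    refine intervalIntegral.integral_congr fun x _ => ?_
    have hJx : deriv (fun x => (B x)⁻¹) x = -deriv B x / B x ^ 2 :=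
      ((hBd x).hasDerivAt.inv (hBne x)).deriv
    rw [hJx]
    field_simp
  rw [← this]
  ring


/-- Entropy production for the diffusive system: if `(r,u)` is a smooth solution of
`∂_t r = (1/(2γ)) ∂_xx τ(r,u)`, `∂_t u = ∂_x(D ∂_x β⁻¹) + (1/(4γ)) ∂_xx(τ²)` on `[0,1]`
with boundary conditions `∂_x τ(t,0) = 0`, `∂_x β⁻¹(t,0) = ∂_x β⁻¹(t,1) = 0`,
`τ(r(t,1),u(t,1)) = τ̄(t)`, then
`d/dt ∫₀¹ S(r,u) dx = ∫₀¹ [D (∂_x β / β)² + (β/(2γ)) (∂_x τ)²] dx ≥ 0`. -/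
theorem entropy_production
    (γ D : ℝ) (hγ : 0 < γ) (hD : 0 < D)
    (S β τ : ℝ → ℝ → ℝ) (τbar : ℝ → ℝ)
    (hS : ContDiff ℝ (⊤ : ℕ∞) (fun p : ℝ × ℝ => S p.1 p.2))
    (hβ : ContDiff ℝ (⊤ : ℕ∞) (fun p : ℝ × ℝ => β p.1 p.2))
    (hτ : ContDiff ℝ (⊤ : ℕ∞) (fun p : ℝ × ℝ => τ p.1 p.2))
    (hβpos : ∀ a b, 0 < β a b)
    (hSu : ∀ a b, deriv (fun y => S a y) b = β a b)
    (hSr : ∀ a b, deriv (fun x => S x b) a = -(β a b) * τ a b)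
    (r u : ℝ → ℝ → ℝ)
    (hr : ContDiff ℝ (⊤ : ℕ∞) (fun p : ℝ × ℝ => r p.1 p.2))
    (hu : ContDiff ℝ (⊤ : ℕ∞) (fun p : ℝ × ℝ => u p.1 p.2))
    (hpde_r : ∀ t x, deriv (fun s => r s x) t
      = (1 / (2 * γ)) * deriv (deriv (fun y => τ (r t y) (u t y))) x)
    (hpde_u : ∀ t x, deriv (fun s => u s x) t
      = deriv (fun y => D * deriv (fun z => (β (r t z) (u t z))⁻¹) y) x
        + (1 / (4 * γ)) * deriv (deriv (fun y => (τ (r t y) (u t y)) ^ 2)) x)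
    (hbc1 : ∀ t, deriv (fun y => τ (r t y) (u t y)) 0 = 0)
    (hbc2 : ∀ t, deriv (fun y => (β (r t y) (u t y))⁻¹) 0 = 0)
    (hbc3 : ∀ t, deriv (fun y => (β (r t y) (u t y))⁻¹) 1 = 0)
    (hbc4 : ∀ t, τ (r t 1) (u t 1) = τbar t) :
    ∀ t, deriv (fun s => ∫ x in (0:ℝ)..1, S (r s x) (u s x)) t
        = (∫ x in (0:ℝ)..1,
            (D * ((deriv (fun y => β (r t y) (u t y)) x) / (β (r t x) (u t x))) ^ 2
              + (β (r t x) (u t x)) / (2 * γ)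
                  * (deriv (fun y => τ (r t y) (u t y)) x) ^ 2)) ∧
      0 ≤ ∫ x in (0:ℝ)..1,
            (D * ((deriv (fun y => β (r t y) (u t y)) x) / (β (r t x) (u t x))) ^ 2
              + (β (r t x) (u t x)) / (2 * γ)
                  * (deriv (fun y => τ (r t y) (u t y)) x) ^ 2) := by
  intro t
  have hγ' : (2 : ℝ) * γ ≠ 0 := by positivity
  -- one-variable smoothness along x (at fixed t)
  have hrx : ContDiff ℝ (⊤ : ℕ∞) (fun y => r t y) := hr.comp (contDiff_const.prodMk contDiff_id)
  have hux : ContDiff ℝ (⊤ : ℕ∞) (fun y => u t y) := hu.comp (contDiff_const.prodMk contDiff_id)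
  have hBs : ContDiff ℝ (⊤ : ℕ∞) (fun y => β (r t y) (u t y)) := hβ.comp (hrx.prodMk hux)
  have hTs : ContDiff ℝ ∞ (fun y => τ (r t y) (u t y)) :=
    (hτ.comp (hrx.prodMk hux)).of_le (by simp)
  have hBne : ∀ y, (fun y => β (r t y) (u t y)) y ≠ 0 := fun y => (hβpos _ _).ne'
  have hIs : ContDiff ℝ ∞ (fun y => (β (r t y) (u t y))⁻¹) := (hBs.inv hBne).of_le (by simp)
  have hJs : ContDiff ℝ ∞ (deriv (fun y => (β (r t y) (u t y))⁻¹)) :=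
    (contDiff_infty_iff_deriv.mp hIs).2
  have hJd : Differentiable ℝ (deriv (fun y => (β (r t y) (u t y))⁻¹)) :=
    hJs.differentiable (by norm_num)
  have hJ's : Continuous (deriv (deriv (fun y => (β (r t y) (u t y))⁻¹))) :=
    ((contDiff_infty_iff_deriv.mp hJs).2).continuous
  have hTd : Differentiable ℝ (fun y => τ (r t y) (u t y)) :=
    hTs.differentiable (by norm_num)
  have hT's : ContDiff ℝ ∞ (deriv (fun y => τ (r t y) (u t y))) :=
    (contDiff_infty_iff_deriv.mp hTs).2
  have hT'd : Differentiable ℝ (deriv (fun y => τ (r t y) (u t y))) :=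
    hT's.differentiable (by norm_num)
  -- the time-derivative of the entropy density
  set G : ℝ → ℝ → ℝ := fun s x =>
    -(β (r s x) (u s x) * τ (r s x) (u s x)) * deriv (fun s' => r s' x) s
      + β (r s x) (u s x) * deriv (fun s' => u s' x) s with hGdef
  have hβc : Continuous (fun p : ℝ × ℝ => β (r p.1 p.2) (u p.1 p.2)) :=
    (hβ.comp (hr.prodMk hu)).continuous
  have hτc : Continuous (fun p : ℝ × ℝ => τ (r p.1 p.2) (u p.1 p.2)) :=
    (hτ.comp (hr.prodMk hu)).continuous
  have hGc : Continuous fun p : ℝ × ℝ => G p.1 p.2 := by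
    exact (((hβc.mul hτc).neg).mul (cont_partial_t hr)).add
      (hβc.mul (cont_partial_t hu))
  have hFc : ∀ s, Continuous fun x => S (r s x) (u s x) := fun s =>
    (hS.comp ((hr.comp (contDiff_const.prodMk contDiff_id)).prodMk
      (hu.comp (contDiff_const.prodMk contDiff_id)))).continuous
  have hFG : ∀ x s, HasDerivAt (fun s' => S (r s' x) (u s' x)) (G s x) s := by
    intro x s
    have h1 : HasDerivAt (fun s' => r s' x) (deriv (fun s' => r s' x) s) s :=
      (((hr.comp (contDiff_id.prodMk contDiff_const)).differentiable (by simp)) s).hasDerivAt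
    have h2 : HasDerivAt (fun s' => u s' x) (deriv (fun s' => u s' x) s) s :=
      (((hu.comp (contDiff_id.prodMk contDiff_const)).differentiable (by simp)) s).hasDerivAt
    have h3 := hasDerivAt_comp2 hS h1 h2
    rw [hSr, hSu] at h3
    convert h3 using 1
    rw [hGdef]
    ring
  have hkey := deriv_param_integral (fun s x => S (r s x) (u s x)) G hGc hFc hFG t
  -- pointwise identity using the PDEs
  have hpt : ∀ x, G t x
      = β (r t x) (u t x) * (D * deriv (deriv (fun y => (β (r t y) (u t y))⁻¹)) x)
        + β (r t x) (u t x) / (2 * γ) * (deriv (fun y => τ (r t y) (u t y)) x) ^ 2 := by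
    intro x
    have e1 : deriv (fun y => D * deriv (fun z => (β (r t z) (u t z))⁻¹) y) x
        = D * deriv (deriv (fun y => (β (r t y) (u t y))⁻¹)) x :=
      deriv_const_mul D (hJd x)
    have e2 : deriv (fun y => (τ (r t y) (u t y)) ^ 2)
        = fun y => 2 * τ (r t y) (u t y) * deriv (fun y => τ (r t y) (u t y)) y := by
      funext y
      simpa [Pi.pow_def] using (((hTd y).hasDerivAt).pow 2).deriv
    have e3 : deriv (deriv (fun y => (τ (r t y) (u t y)) ^ 2)) x
        = 2 * deriv (fun y => τ (r t y) (u t y)) x * deriv (fun y => τ (r t y) (u t y)) x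
          + 2 * τ (r t x) (u t x) * deriv (deriv (fun y => τ (r t y) (u t y))) x := by
      rw [e2]
      have h4 : HasDerivAt
          (fun y => 2 * τ (r t y) (u t y) * deriv (fun y => τ (r t y) (u t y)) y)
          (2 * deriv (fun y => τ (r t y) (u t y)) x * deriv (fun y => τ (r t y) (u t y)) x
            + 2 * τ (r t x) (u t x) * deriv (deriv (fun y => τ (r t y) (u t y))) x) x := by
        have := (((hTd x).hasDerivAt).const_mul 2).mul ((hT'd x).hasDerivAt)
        exact this
      exact h4.deriv
    rw [hGdef]
    simp only [hpde_r t x, hpde_u t x, e1, e3]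
    field_simp
    ring
  -- split the integral and integrate the D-term by parts
  have hint1 : IntervalIntegrable
      (fun x => β (r t x) (u t x) * (D * deriv (deriv (fun y => (β (r t y) (u t y))⁻¹)) x))
      volume 0 1 :=
    (hBs.continuous.mul (continuous_const.mul hJ's)).intervalIntegrable _ _
  have hint2 : IntervalIntegrable
      (fun x => β (r t x) (u t x) / (2 * γ) * (deriv (fun y => τ (r t y) (u t y)) x) ^ 2)
      volume 0 1 :=
    ((hBs.continuous.div_const _).mul (hT's.continuous.pow 2)).intervalIntegrable _ _
  have hsum : (∫ x in (0:ℝ)..1, G t x)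
      = (∫ x in (0:ℝ)..1,
          β (r t x) (u t x) * (D * deriv (deriv (fun y => (β (r t y) (u t y))⁻¹)) x))
        + ∫ x in (0:ℝ)..1,
          β (r t x) (u t x) / (2 * γ) * (deriv (fun y => τ (r t y) (u t y)) x) ^ 2 := by
    rw [intervalIntegral.integral_congr (g := fun x =>
      β (r t x) (u t x) * (D * deriv (deriv (fun y => (β (r t y) (u t y))⁻¹)) x)
        + β (r t x) (u t x) / (2 * γ) * (deriv (fun y => τ (r t y) (u t y)) x) ^ 2)
      (fun x _ => hpt x)]
    exact intervalIntegral.integral_add hint1 hint2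
  have hibp := ibp_term D (fun y => β (r t y) (u t y)) hBs (fun y => hβpos _ _)
    (hbc2 t) (hbc3 t)
  have hint3 : IntervalIntegrable
      (fun x => D * (deriv (fun y => β (r t y) (u t y)) x / β (r t x) (u t x)) ^ 2)
      volume 0 1 := by
    have hB's : Continuous (deriv (fun y => β (r t y) (u t y))) :=
      ((contDiff_infty_iff_deriv.mp (hBs.of_le (by simp))).2).continuous
    exact (continuous_const.mul ((hB's.div hBs.continuous hBne).pow 2)).intervalIntegrable _ _
  have hmain : deriv (fun s => ∫ x in (0:ℝ)..1, S (r s x) (u s x)) t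
      = ∫ x in (0:ℝ)..1,
          (D * ((deriv (fun y => β (r t y) (u t y)) x) / (β (r t x) (u t x))) ^ 2
            + (β (r t x) (u t x)) / (2 * γ)
                * (deriv (fun y => τ (r t y) (u t y)) x) ^ 2) := by
    rw [hkey.deriv, hsum, hibp, ← intervalIntegral.integral_add hint3 hint2]
  refine ⟨hmain, ?_⟩
  refine intervalIntegral.integral_nonneg (by norm_num) fun x _ => ?_
  have h1 : (0:ℝ) ≤ D * ((deriv (fun y => β (r t y) (u t y)) x) / (β (r t x) (u t x))) ^ 2 :=
    mul_nonneg hD.le (sq_nonneg _)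
  have h2 : (0:ℝ) ≤ (β (r t x) (u t x)) / (2 * γ)
      * (deriv (fun y => τ (r t y) (u t y)) x) ^ 2 :=
    mul_nonneg (div_nonneg (hβpos _ _).le (by linarith)) (sq_nonneg _)
  linarith
end

section
/- If every eigenvalue of D (a symmetric n×n real matrix) is strictly negative and γ > 0, then every eigenvalue of M = [[0, I_n],[D, -2γ I_n]] has strictly negative real part. -/
open Matrix

/-- Determinant of `z • 1 - A` for a Hermitian complex matrix is the product over
its (real) eigenvalues. -/
lemma det_smul_one_sub_of_isHermitian {n : ℕ} (A : Matrix (Fin n) (Fin n) ℂ)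
    (hA : A.IsHermitian) (z : ℂ) :
    (z • (1 : Matrix (Fin n) (Fin n) ℂ) - A).det
      = ∏ i, (z - (hA.eigenvalues i : ℂ)) := by
  set U : Matrix (Fin n) (Fin n) ℂ := (hA.eigenvectorUnitary : Matrix (Fin n) (Fin n) ℂ)
  have hU : U * star U = 1 := Matrix.mem_unitaryGroup_iff.mp hA.eigenvectorUnitary.2
  have key : z • (1 : Matrix (Fin n) (Fin n) ℂ) - A
      = U * (z • 1 - diagonal (Complex.ofReal ∘ hA.eigenvalues)) * star U := by
    rw [Matrix.mul_sub, Matrix.sub_mul]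
    congr 1
    · rw [mul_smul_comm, smul_mul_assoc, mul_one, hU]
    · exact hA.spectral_theorem
  rw [key, Matrix.det_mul_right_comm, hU, one_mul]
  have : z • (1 : Matrix (Fin n) (Fin n) ℂ) - diagonal (Complex.ofReal ∘ hA.eigenvalues)
      = diagonal (fun i => z - (hA.eigenvalues i : ℂ)) := by
    ext i j
    rcases eq_or_ne i j with h | h <;>
      simp [Matrix.one_apply, Matrix.diagonal_apply, h]
  rw [this, Matrix.det_diagonal]

/-- If `D` is a real symmetric matrix all of whose eigenvalues are strictly negative
and `γ > 0`, then every eigenvalue of `M = [[0, Iₙ],[D, -2γ Iₙ]]` has strictly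
negative real part. -/
theorem block_matrix_hurwitz (n : ℕ) (D : Matrix (Fin n) (Fin n) ℝ) (γ : ℝ)
    (hγ : 0 < γ) (hD : D.IsSymm)
    (hneg : ∀ μ : ℝ, (μ • (1 : Matrix (Fin n) (Fin n) ℝ) - D).det = 0 → μ < 0) :
    ∀ x : ℂ,
      ((x • (1 : Matrix (Fin n ⊕ Fin n) (Fin n ⊕ Fin n) ℂ))
          - (Matrix.fromBlocks 0 1 D (-(2 * γ) • 1)).map (Complex.ofReal)).det = 0 →
      x.re < 0 := by
  intro x hx
  set D' : Matrix (Fin n) (Fin n) ℂ := D.map Complex.ofReal with hD'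
  have hD'herm : D'.IsHermitian := by
    ext i j
    simp [hD', Matrix.conjTranspose_apply, ← hD.apply i j]
  set d : ℂ := x + 2 * γ with hd
  by_cases hd0 : d = 0
  · -- x = -2γ
    have : x = -(2 * γ) := by
      have := hd0
      rw [hd] at this
      linear_combination this
    rw [this]
    simp
    positivity
  -- rewrite the big matrix as fromBlocks
  have hblock : (x • (1 : Matrix (Fin n ⊕ Fin n) (Fin n ⊕ Fin n) ℂ))
          - (Matrix.fromBlocks 0 1 D (-(2 * γ) • 1)).map (Complex.ofReal)
      = Matrix.fromBlocks (x • 1) (-1) (-D') (d • 1) := by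
    ext (i | i) (j | j) <;>
      simp [Matrix.fromBlocks, Matrix.one_apply, hd, hD', Matrix.smul_apply,
        Matrix.sub_apply, Matrix.map_apply, apply_ite Complex.ofReal, mul_comm] <;>
      split <;> simp <;> ring
  rw [hblock] at hx
  -- invertibility of d • 1
  haveI : Invertible (d • (1 : Matrix (Fin n) (Fin n) ℂ)) :=
    ⟨d⁻¹ • 1, by rw [smul_mul_smul_comm, inv_mul_cancel₀ hd0, one_mul, one_smul],
      by rw [smul_mul_smul_comm, mul_inv_cancel₀ hd0, one_mul, one_smul]⟩
  rw [Matrix.det_fromBlocks₂₂] at hx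
  have hinv : ⅟(d • (1 : Matrix (Fin n) (Fin n) ℂ)) = d⁻¹ • 1 :=
    invOf_eq_right_inv
      (by rw [smul_mul_smul_comm, mul_inv_cancel₀ hd0, one_mul, one_smul])
  rw [hinv] at hx
  have hdetd : (d • (1 : Matrix (Fin n) (Fin n) ℂ)).det ≠ 0 := by
    rw [Matrix.det_smul, Matrix.det_one, mul_one]
    exact pow_ne_zero _ hd0
  have hx2 : (x • (1 : Matrix (Fin n) (Fin n) ℂ)
      - (-1) * (d⁻¹ • 1) * (-D')).det = 0 := by
    rcases mul_eq_zero.mp hx with h | h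
    · exact absurd h hdetd
    · exact h
  have hsimp : x • (1 : Matrix (Fin n) (Fin n) ℂ) - (-1) * (d⁻¹ • 1) * (-D')
      = x • 1 - d⁻¹ • D' := by
    rw [neg_one_mul, neg_mul, mul_neg, neg_neg, smul_mul_assoc, one_mul]
  rw [hsimp] at hx2
  -- multiply by d
  have hx3 : ((x * d) • (1 : Matrix (Fin n) (Fin n) ℂ) - D').det = 0 := by
    have : (x * d) • (1 : Matrix (Fin n) (Fin n) ℂ) - D'
        = d • (x • 1 - d⁻¹ • D') := by
      rw [smul_sub, smul_smul, smul_smul, mul_inv_cancel₀ hd0, one_smul, mul_comm]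
    rw [this, Matrix.det_smul, hx2, mul_zero]
  -- use the Hermitian eigenvalue decomposition
  rw [det_smul_one_sub_of_isHermitian D' hD'herm] at hx3
  obtain ⟨i, -, hi⟩ := Finset.prod_eq_zero_iff.mp hx3
  have hxd : x * d = (hD'herm.eigenvalues i : ℂ) := by linear_combination hi
  set μ : ℝ := hD'herm.eigenvalues i with hμ
  -- μ is an eigenvalue of D over ℝ
  have hμneg : μ < 0 := by
    apply hneg
    have hdet : ((μ : ℂ) • (1 : Matrix (Fin n) (Fin n) ℂ) - D').det = 0 := by
      rw [det_smul_one_sub_of_isHermitian D' hD'herm]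
      exact Finset.prod_eq_zero (Finset.mem_univ i) (by simp [hμ])
    have hmap : (μ : ℂ) • (1 : Matrix (Fin n) (Fin n) ℂ) - D'
        = (μ • (1 : Matrix (Fin n) (Fin n) ℝ) - D).map Complex.ofReal := by
      ext i j
      simp [hD', Matrix.one_apply, apply_ite Complex.ofReal]
    rw [hmap] at hdet
    have h2 : (Complex.ofRealHom (μ • (1 : Matrix (Fin n) (Fin n) ℝ) - D).det : ℂ) = 0 := by
      rw [RingHom.map_det]
      exact hdet
    rw [Complex.ofRealHom_eq_coe] at h2
    exact_mod_cast h2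
  -- now the root analysis: x * (x + 2γ) = μ < 0 implies x.re < 0
  by_contra hre
  push_neg at hre
  have him : x.im * (2 * x.re + 2 * γ) = 0 := by
    have := congrArg Complex.im hxd
    simp [hd, Complex.mul_im, Complex.add_im, Complex.add_re] at this
    linarith [this]
  have hb : x.im = 0 := by
    rcases mul_eq_zero.mp him with h | h
    · exact h
    · nlinarith
  have hrealeq : x.re * (x.re + 2 * γ) = μ := by
    have := congrArg Complex.re hxd
    simp [hd, Complex.mul_re, Complex.add_re, Complex.add_im, hb] at this
    linarith [this]
  nlinarith
end
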